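/- Let G be a graph of order n. Then ρ(G) ≤ √(2e(G) − n + 1), with equality if and only if G is the star K_{1,n−1} or the complete graph K_n. -/

import Mathlib

open scoped Classical

/-- The largest real eigenvalue of a real matrix. -/
noncomputable def maxEig {V : Type*} [Fintype V] (M : Matrix V V ℝ) : ℝ :=
  sSup {t : ℝ | ∃ x : V → ℝ, x ≠ 0 ∧ M.mulVec x = t • x}

/-- The adjacency matrix of a simple graph (over ℝ). -/
noncomputable def adjMat {V : Type*} [Fintype V] (G : SimpleGraph V) : Matrix V V ℝ :=
  Matrix.of fun i j => if G.Adj i j then 1 else 0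

/-- The adjacency spectral radius ρ(G). -/
noncomputable def adjRad {V : Type*} [Fintype V] (G : SimpleGraph V) : ℝ :=
  maxEig (adjMat G)

/-- The signless Laplacian matrix Q(G) = D(G) + A(G). -/
noncomputable def signlessLapMat {V : Type*} [Fintype V] (G : SimpleGraph V) : Matrix V V ℝ :=
  Matrix.of (fun i j => if i = j then ({w | G.Adj i w}.ncard : ℝ) else 0) + adjMat G

/-- The signless Laplacian spectral radius q(G). -/
noncomputable def qRad {V : Type*} [Fintype V] (G : SimpleGraph V) : ℝ :=
  maxEig (signlessLapMat G)

/-- The distance matrix of a graph. -/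
noncomputable def distMat {V : Type*} [Fintype V] (G : SimpleGraph V) : Matrix V V ℝ :=
  Matrix.of fun i j => (G.dist i j : ℝ)

/-- The distance spectral radius μ(G). -/
noncomputable def distRad {V : Type*} [Fintype V] (G : SimpleGraph V) : ℝ :=
  maxEig (distMat G)

/-- i(G - S): the number of isolated vertices of the subgraph of `G` induced on `V ∖ S`. -/
noncomputable def numIso {V : Type*} (G : SimpleGraph V) (S : Set V) : ℕ :=
  {v | v ∉ S ∧ ∀ w ∉ S, ¬ G.Adj v w}.ncard

/-- `G` is isolated `t`-tough: `t · i(G−S) ≤ |S|` whenever `i(G−S) ≥ 2`. -/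
def IsolatedTough {V : Type*} (G : SimpleGraph V) (t : ℝ) : Prop :=
  ∀ S : Set V, 2 ≤ numIso G S → t * (numIso G S : ℝ) ≤ (S.ncard : ℝ)

/-- `G` has a `{K_{1,j} : m ≤ j ≤ 2m}`-factor: a spanning subgraph each of whose
connected components is isomorphic to a star `K_{1,j}` with `m ≤ j ≤ 2m`. -/
def HasStarFactor {V : Type*} (G : SimpleGraph V) (m : ℕ) : Prop :=
  ∃ H : SimpleGraph V, H ≤ G ∧ ∀ c : H.ConnectedComponent,
    ∃ j : ℕ, m ≤ j ∧ j ≤ 2 * m ∧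
      Nonempty ((SimpleGraph.induce c.supp H) ≃g completeBipartiteGraph (Fin 1) (Fin j))

/-- The graph `K_s ∨ (K_{n-s-t} ∪ t·K_1)` on `Fin n`: the first `s` vertices form a
clique joined to all other vertices, the next `n - t - s` vertices form a clique, and
the last `t` vertices form an independent set. -/
def Gstar (n s t : ℕ) : SimpleGraph (Fin n) where
  Adj u v := u ≠ v ∧ ((u : ℕ) < s ∨ (v : ℕ) < s ∨ ((u : ℕ) < n - t ∧ (v : ℕ) < n - t))
  symm := by
    refine ⟨?_⟩
    intro u v h
    refine ⟨h.1.symm, ?_⟩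
    rcases h.2 with h | h | h
    · exact Or.inr (Or.inl h)
    · exact Or.inl h
    · exact Or.inr (Or.inr ⟨h.2, h.1⟩)
  loopless := by refine ⟨?_⟩; intro u h; exact h.1 rfl

/-- The number of edges e(G). -/
noncomputable def edgeCount {V : Type*} (G : SimpleGraph V) : ℕ := G.edgeSet.ncard

/-- The Wiener index W(G) = Σ_{i<j} d(v_i, v_j). -/
noncomputable def wiener {n : ℕ} (G : SimpleGraph (Fin n)) : ℕ :=
  ∑ p ∈ Finset.univ.filter (fun p : Fin n × Fin n => p.1 < p.2), G.dist p.1 p.2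


namespace HongAux
open Matrix Finset

variable {V : Type*} [Fintype V]

section One
variable [DecidableEq V] {M : Matrix V V ℝ}

variable {V : Type*} [Fintype V] [DecidableEq V] {M : Matrix V V ℝ}

lemma eigS_subset_range (hM : M.IsHermitian) :
    {t : ℝ | ∃ x : V → ℝ, x ≠ 0 ∧ M.mulVec x = t • x} ⊆ Set.range hM.eigenvalues := by
  rintro t ⟨x, hx, hMx⟩
  set U := (hM.eigenvectorUnitary : Matrix V V ℝ) with hUdef
  have hU1 : U * star U = 1 := Matrix.mem_unitaryGroup_iff.mp hM.eigenvectorUnitary.2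
  set y := star U *ᵥ x with hy
  have hy0 : y ≠ 0 := by
    intro h
    apply hx
    have h2 : U *ᵥ y = x := by
      rw [hy, Matrix.mulVec_mulVec, hU1, Matrix.one_mulVec]
    rw [h, Matrix.mulVec_zero] at h2
    exact h2.symm
  have hSD : star U * M * U = Matrix.diagonal (RCLike.ofReal ∘ hM.eigenvalues) := by
    rw [← hM.conjStarAlgAut_star_eigenvectorUnitary]; simp [hUdef]
  have hdiag : Matrix.diagonal (RCLike.ofReal ∘ hM.eigenvalues) *ᵥ y = t • y := by
    rw [← hSD, hy, Matrix.mulVec_mulVec, mul_assoc,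
      mul_assoc, hU1, mul_one, ← Matrix.mulVec_mulVec, hMx, Matrix.mulVec_smul]
  obtain ⟨i, hi⟩ := Function.ne_iff.mp hy0
  have := congrFun hdiag i
  rw [Matrix.mulVec_diagonal] at this
  refine ⟨i, ?_⟩
  have h3 : (RCLike.ofReal ∘ hM.eigenvalues) i = t := by
    simp only [Pi.smul_apply, smul_eq_mul] at this
    exact mul_right_cancel₀ hi this
  simpa using h3

lemma eigS_finite (hM : M.IsHermitian) :
    {t : ℝ | ∃ x : V → ℝ, x ≠ 0 ∧ M.mulVec x = t • x}.Finite :=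
  Set.Finite.subset (Set.finite_range _) (eigS_subset_range hM)

lemma eigS_nonempty [Nonempty V] (hM : M.IsHermitian) :
    {t : ℝ | ∃ x : V → ℝ, x ≠ 0 ∧ M.mulVec x = t • x}.Nonempty := by
  obtain ⟨j⟩ := ‹Nonempty V›
  refine ⟨hM.eigenvalues j, ⇑(hM.eigenvectorBasis j), ?_, hM.mulVec_eigenvectorBasis j⟩
  intro h
  have := hM.eigenvectorBasis.orthonormal.1 j
  rw [show ⇑(hM.eigenvectorBasis j) = fun i => hM.eigenvectorBasis j i from rfl] at h
  have hz : hM.eigenvectorBasis j = 0 := by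
    ext i; exact congrFun h i
  rw [hz] at this
  simp at this


variable {V : Type*} [Fintype V] [DecidableEq V] {M : Matrix V V ℝ}

lemma maxEig_mem [Nonempty V] (hM : M.IsHermitian) :
    ∃ x : V → ℝ, x ≠ 0 ∧ M.mulVec x = maxEig M • x :=
  (eigS_nonempty hM).csSup_mem (eigS_finite hM)

lemma le_maxEig (hM : M.IsHermitian) {t : ℝ} {x : V → ℝ} (hx : x ≠ 0)
    (h : M.mulVec x = t • x) : t ≤ maxEig M :=
  le_csSup (eigS_finite hM).bddAbove ⟨x, hx, h⟩


variable {V : Type*} [Fintype V] (G : SimpleGraph V)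

lemma adjMat_apply (i j : V) : adjMat G i j = if G.Adj i j then 1 else 0 := rfl

lemma adjMat_nonneg (i j : V) : 0 ≤ adjMat G i j := by
  rw [adjMat_apply]; split <;> norm_num

lemma adjMat_herm : (adjMat G).IsHermitian := by
  unfold Matrix.IsHermitian
  ext i j
  simp [Matrix.conjTranspose_apply, adjMat_apply, G.adj_comm]

lemma sum_adjMat_row (i : V) : ∑ k, adjMat G i k = (G.degree i : ℝ) := by
  simp only [adjMat_apply]
  rw [Finset.sum_boole]
  congr 1
  rw [SimpleGraph.degree, SimpleGraph.neighborFinset_eq_filter]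

lemma sum_adjMat_weighted (i : V) (f : V → ℝ) :
    ∑ k, adjMat G i k * f k = ∑ k ∈ G.neighborFinset i, f k := by
  rw [SimpleGraph.neighborFinset_eq_filter, Finset.sum_filter]
  congr 1; ext k
  rw [adjMat_apply]
  split <;> simp

lemma edgeCount_eq : (edgeCount G : ℝ) = (G.edgeFinset.card : ℝ) := by
  rw [edgeCount, ← Set.ncard_coe_finset, SimpleGraph.coe_edgeFinset]

lemma sum_degrees : ∑ v, (G.degree v : ℝ) = 2 * (edgeCount G : ℝ) := by
  rw [edgeCount_eq]
  rw [← Nat.cast_sum]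
  rw [SimpleGraph.sum_degrees_eq_twice_card_edges]
  push_cast
  ring


end One

section Two
variable {G : SimpleGraph V}

variable {V : Type*} [Fintype V] (G : SimpleGraph V)

lemma rowsum_identity (i : V) :
    ∑ k, adjMat G i k * (G.degree k : ℝ)
      = (2 * (edgeCount G : ℝ) - Fintype.card V + 1)
        - ∑ k ∈ Finset.univ \ insert i (G.neighborFinset i), ((G.degree k : ℝ) - 1) := by
  have hsub : insert i (G.neighborFinset i) ⊆ Finset.univ := Finset.subset_univ _
  have hnm : i ∉ G.neighborFinset i := by
    simp [SimpleGraph.mem_neighborFinset]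
  have hcard : (Finset.univ \ insert i (G.neighborFinset i)).card
      = Fintype.card V - (G.degree i + 1) := by
    rw [Finset.card_sdiff_of_subset hsub, Finset.card_insert_of_notMem hnm, Finset.card_univ,
      SimpleGraph.degree]
  have hle : G.degree i + 1 ≤ Fintype.card V := by
    calc G.degree i + 1 = (insert i (G.neighborFinset i)).card := by
          rw [Finset.card_insert_of_notMem hnm, SimpleGraph.degree]
      _ ≤ Fintype.card V := by rw [← Finset.card_univ]; exact Finset.card_le_card hsub
  have hsplit : ∑ v, (G.degree v : ℝ)
      = ((G.degree i : ℝ) + ∑ k ∈ G.neighborFinset i, (G.degree k : ℝ))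
        + ∑ k ∈ Finset.univ \ insert i (G.neighborFinset i), (G.degree k : ℝ) := by
    rw [← Finset.sum_sdiff hsub, Finset.sum_insert hnm]
    ring
  have hsumsub : ∑ k ∈ Finset.univ \ insert i (G.neighborFinset i), ((G.degree k : ℝ) - 1)
      = (∑ k ∈ Finset.univ \ insert i (G.neighborFinset i), (G.degree k : ℝ))
        - ((Fintype.card V : ℝ) - (G.degree i : ℝ) - 1) := by
    rw [Finset.sum_sub_distrib]
    congr 1
    rw [Finset.sum_const, nsmul_eq_mul, mul_one, hcard]
    rw [Nat.cast_sub hle]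
    push_cast
    ring
  rw [sum_adjMat_weighted, hsumsub]
  have := sum_degrees G
  rw [hsplit] at this
  linarith


variable {V : Type*} [Fintype V] {G : SimpleGraph V}

lemma degree_pos (hG : G.Connected) (hn : 2 ≤ Fintype.card V) (v : V) :
    1 ≤ G.degree v := by
  rw [Nat.one_le_iff_ne_zero, ← Nat.pos_iff_ne_zero, G.degree_pos_iff_exists_adj v]
  obtain ⟨w, hw⟩ := Fintype.exists_ne_of_one_lt_card hn v
  obtain ⟨p⟩ := hG.preconnected v w
  cases p with
  | nil => exact absurd rfl hw.symm
  | cons h _ => exact ⟨_, h⟩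

lemma rowsum_le (hdeg : ∀ v, 1 ≤ G.degree v) (i : V) :
    ∑ k, adjMat G i k * (G.degree k : ℝ)
      ≤ 2 * (edgeCount G : ℝ) - Fintype.card V + 1 := by
  rw [rowsum_identity]
  have : (0:ℝ) ≤ ∑ k ∈ Finset.univ \ insert i (G.neighborFinset i), ((G.degree k : ℝ) - 1) := by
    apply Finset.sum_nonneg
    intro k _
    have := hdeg k
    have : (1:ℝ) ≤ (G.degree k : ℝ) := by exact_mod_cast this
    linarith
  linarith

lemma rowsum_eq_forces (hdeg : ∀ v, 1 ≤ G.degree v) (i : V)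
    (h : ∑ k, adjMat G i k * (G.degree k : ℝ)
      = 2 * (edgeCount G : ℝ) - Fintype.card V + 1) :
    ∀ k, k ≠ i → ¬ G.Adj i k → G.degree k = 1 := by
  intro k hki hik
  have hz : ∑ k ∈ Finset.univ \ insert i (G.neighborFinset i), ((G.degree k : ℝ) - 1) = 0 := by
    have := rowsum_identity G i
    rw [h] at this
    linarith
  have hmem : k ∈ Finset.univ \ insert i (G.neighborFinset i) := by
    simp [hki, SimpleGraph.mem_neighborFinset, hik]
  have hnn : ∀ j ∈ Finset.univ \ insert i (G.neighborFinset i), (0:ℝ) ≤ (G.degree j : ℝ) - 1 := by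
    intro j _
    have := hdeg j
    have : (1:ℝ) ≤ (G.degree j : ℝ) := by exact_mod_cast this
    linarith
  have := (Finset.sum_eq_zero_iff_of_nonneg hnn).mp hz k hmem
  have h1 : (G.degree k : ℝ) = 1 := by linarith
  exact_mod_cast h1

lemma one_le_B (hG : G.Connected) (hdeg : ∀ v, 1 ≤ G.degree v) [Nonempty V] :
    (1:ℝ) ≤ 2 * (edgeCount G : ℝ) - Fintype.card V + 1 := by
  obtain ⟨i⟩ := ‹Nonempty V›
  have h1 := rowsum_le hdeg i
  refine le_trans ?_ h1
  rw [sum_adjMat_weighted]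
  obtain ⟨m, hm⟩ := (G.degree_pos_iff_exists_adj i).mp (hdeg i)
  calc (1:ℝ) ≤ (G.degree m : ℝ) := by exact_mod_cast hdeg m
    _ ≤ ∑ k ∈ G.neighborFinset i, (G.degree k : ℝ) := by
        apply Finset.single_le_sum (f := fun k => (G.degree k : ℝ))
        · intro j _; positivity
        · rwa [SimpleGraph.mem_neighborFinset]


variable {V : Type*} [Fintype V] {G : SimpleGraph V}

lemma A2row {t : ℝ} {x : V → ℝ} (hMx : (adjMat G).mulVec x = t • x) (j : V) :
    t^2 * x j = ∑ m, adjMat G j m * ∑ k, adjMat G m k * x k := by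
  have h2 : (adjMat G).mulVec ((adjMat G).mulVec x) = (t^2) • x := by
    rw [hMx, Matrix.mulVec_smul, hMx, smul_smul, ← sq]
  have := congrFun h2 j
  simp only [Matrix.mulVec, dotProduct, Pi.smul_apply, smul_eq_mul] at this
  rw [← this]

lemma const_rowsum (m : V) (c : ℝ) :
    ∑ k, adjMat G m k * c = (G.degree m : ℝ) * c := by
  rw [← Finset.sum_mul, sum_adjMat_row]

lemma eig_sq_le (hdeg : ∀ v, 1 ≤ G.degree v) {t : ℝ} {x : V → ℝ}
    (hx : x ≠ 0) (hMx : (adjMat G).mulVec x = t • x) :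
    t^2 ≤ 2 * (edgeCount G : ℝ) - Fintype.card V + 1 := by
  set B := 2 * (edgeCount G : ℝ) - Fintype.card V + 1 with hB
  have hne : Nonempty V := ⟨(Function.ne_iff.mp hx).choose⟩
  obtain ⟨i, -, hmax⟩ := Finset.exists_max_image Finset.univ (fun v => |x v|)
    ⟨Classical.arbitrary V, Finset.mem_univ _⟩
  have hmax : ∀ k, |x k| ≤ |x i| := fun k => hmax k (Finset.mem_univ k)
  have hipos : 0 < |x i| := by
    obtain ⟨k, hk⟩ := Function.ne_iff.mp hx
    exact lt_of_lt_of_le (abs_pos.mpr hk) (hmax k)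
  have key : t^2 * |x i| ≤ B * |x i| := by
    calc t^2 * |x i| = |t^2 * x i| := by
          rw [abs_mul, abs_of_nonneg (sq_nonneg t)]
      _ = |∑ m, adjMat G i m * ∑ k, adjMat G m k * x k| := by rw [A2row hMx]
      _ ≤ ∑ m, |adjMat G i m * ∑ k, adjMat G m k * x k| := Finset.abs_sum_le_sum_abs _ _
      _ ≤ ∑ m, adjMat G i m * ((G.degree m : ℝ) * |x i|) := by
          apply Finset.sum_le_sum
          intro m _
          rw [abs_mul, abs_of_nonneg (adjMat_nonneg G i m)]
          apply mul_le_mul_of_nonneg_left _ (adjMat_nonneg G i m)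
          calc |∑ k, adjMat G m k * x k| ≤ ∑ k, |adjMat G m k * x k| :=
                Finset.abs_sum_le_sum_abs _ _
            _ ≤ ∑ k, adjMat G m k * |x i| := by
                apply Finset.sum_le_sum
                intro k _
                rw [abs_mul, abs_of_nonneg (adjMat_nonneg G m k)]
                exact mul_le_mul_of_nonneg_left (hmax k) (adjMat_nonneg G m k)
            _ = (G.degree m : ℝ) * |x i| := const_rowsum m _
      _ = (∑ m, adjMat G i m * (G.degree m : ℝ)) * |x i| := by
          rw [Finset.sum_mul]; congr 1; ext m; ring
      _ ≤ B * |x i| := by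
          apply mul_le_mul_of_nonneg_right (rowsum_le hdeg i) (le_of_lt hipos)
  exact le_of_mul_le_mul_right key hipos

lemma forcing (hdeg : ∀ v, 1 ≤ G.degree v) {t : ℝ} {x : V → ℝ}
    (hMx : (adjMat G).mulVec x = t • x)
    (ht2 : t^2 = 2 * (edgeCount G : ℝ) - Fintype.card V + 1)
    {i : V} (hpos : 0 < x i) (hmax : ∀ k, x k ≤ x i) (j : V) (hj : x j = x i) :
    (∀ k, k ≠ j → ¬ G.Adj j k → G.degree k = 1) ∧
    (∀ m k, G.Adj j m → G.Adj m k → x k = x i) := by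
  set B := 2 * (edgeCount G : ℝ) - Fintype.card V + 1 with hB
  set g : V → ℝ := fun m => adjMat G j m * ((G.degree m : ℝ) * x i - ∑ k, adjMat G m k * x k)
    with hg
  have hginner : ∀ m, ∑ k, adjMat G m k * x k ≤ (G.degree m : ℝ) * x i := by
    intro m
    rw [← const_rowsum m (x i)]
    apply Finset.sum_le_sum
    intro k _
    exact mul_le_mul_of_nonneg_left (hmax k) (adjMat_nonneg G m k)
  have hgnn : ∀ m, 0 ≤ g m := by
    intro m
    apply mul_nonneg (adjMat_nonneg G j m)
    linarith [hginner m]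
  have hsumg : ∑ m, g m = (∑ m, adjMat G j m * (G.degree m : ℝ)) * x i - B * x i := by
    have h1 : ∑ m, g m = (∑ m, adjMat G j m * ((G.degree m : ℝ) * x i))
        - ∑ m, adjMat G j m * ∑ k, adjMat G m k * x k := by
      rw [← Finset.sum_sub_distrib]
      congr 1; ext m; rw [hg]; ring
    rw [h1, ← A2row hMx j, hj, ht2, Finset.sum_mul]
    congr 2
    ext m; ring
  have hslack : 0 ≤ (B - ∑ m, adjMat G j m * (G.degree m : ℝ)) * x i := by
    apply mul_nonneg _ (le_of_lt hpos)
    linarith [rowsum_le hdeg j]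
  have hsumg_nonneg : 0 ≤ ∑ m, g m := Finset.sum_nonneg (fun m _ => hgnn m)
  have hzero : ∑ m, g m = 0 ∧ ∑ m, adjMat G j m * (G.degree m : ℝ) = B := by
    constructor
    · nlinarith [hsumg, hslack, hsumg_nonneg]
    · nlinarith [hsumg, hslack, hsumg_nonneg]
  constructor
  · exact rowsum_eq_forces hdeg j hzero.2
  · intro m k hjm hmk
    have hgm : g m = 0 := by
      have := (Finset.sum_eq_zero_iff_of_nonneg (fun m _ => hgnn m)).mp hzero.1 m
        (Finset.mem_univ m)
      exact this
    simp only [hg] at hgm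
    have hAjm : adjMat G j m = 1 := by rw [adjMat_apply]; simp [hjm]
    rw [hAjm, one_mul, sub_eq_zero] at hgm
    -- now ∑ k, adjMat G m k * x k = deg m * x i, each term ≤, so each equal
    have hterm : ∀ l ∈ Finset.univ, adjMat G m l * x l = adjMat G m l * x i := by
      have hsum : ∑ l, (adjMat G m l * x i - adjMat G m l * x l) = 0 := by
        rw [Finset.sum_sub_distrib, ← Finset.sum_mul, sum_adjMat_row, hgm.symm]
        ring
      intro l _
      have := (Finset.sum_eq_zero_iff_of_nonneg ?_).mp hsum l (Finset.mem_univ l)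
      · linarith
      · intro l _
        have := mul_le_mul_of_nonneg_left (hmax l) (adjMat_nonneg G m l)
        linarith
    have := hterm k (Finset.mem_univ k)
    have hAmk : adjMat G m k = 1 := by rw [adjMat_apply]; simp [hmk]
    rw [hAmk, one_mul, one_mul] at this
    exact this


variable {V : Type*} [Fintype V] {G : SimpleGraph V}

omit [Fintype V] in
lemma walk_mem {S : Set V} (hcl : ∀ a b, a ∈ S → G.Adj a b → b ∈ S) :
    ∀ {u v : V}, G.Walk u v → u ∈ S → v ∈ S := by
  intro u v p
  induction p with
  | nil => exact id
  | cons h q ih => exact fun hu => ih (hcl _ _ hu h)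

lemma uniq_nbr {u w : V} (h1 : G.degree u = 1) (hw : G.Adj u w) :
    ∀ z, G.Adj u z → z = w := by
  intro z hz
  have hcard : (G.neighborFinset u).card ≤ 1 := by
    rw [SimpleGraph.card_neighborFinset_eq_degree, h1]
  exact Finset.card_le_one.mp hcard z (by rwa [SimpleGraph.mem_neighborFinset])
    w (by rwa [SimpleGraph.mem_neighborFinset])

lemma comb (hG : G.Connected) (hdeg : ∀ v, 1 ≤ G.degree v)
    (P : V → Prop) (i : V) (hPi : P i)
    (H1 : ∀ j, P j → ∀ k, k ≠ j → ¬ G.Adj j k → G.degree k = 1)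
    (H2 : ∀ j, P j → ∀ m k, G.Adj j m → G.Adj m k → P k) :
    (∃ c, ∀ v, v ≠ c → G.Adj c v ∧ G.degree v = 1) ∨ (∀ u v, u ≠ v → G.Adj u v) := by
  by_cases hcompl : ∀ u v, u ≠ v → G.Adj u v
  · exact Or.inr hcompl
  push_neg at hcompl
  obtain ⟨u0, v0, huv0, hnadj0⟩ := hcompl
  left
  by_cases hid : ∀ v, v ≠ i → G.Adj i v
  · -- Subcase A : i adjacent to everyone
    refine ⟨i, fun v hv => ⟨hid v hv, ?_⟩⟩
    by_contra hdv
    have h2v : 1 < (G.neighborFinset v).card := by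
      rw [SimpleGraph.card_neighborFinset_eq_degree]
      have := hdeg v; omega
    obtain ⟨k, hk, hki⟩ := Finset.exists_mem_ne h2v i
    rw [SimpleGraph.mem_neighborFinset] at hk
    have hPv : P v := H2 i hPi k v (hid k hki) hk.symm
    have hPall : ∀ l, P l := by
      intro l
      by_cases hl : l = i
      · rw [hl]; exact hPi
      · exact H2 v hPv i l (hid v hv).symm (hid l hl)
    have hu0i : u0 ≠ i := by
      intro h
      subst h
      exact hnadj0 (hid v0 huv0.symm)
    have hv0i : v0 ≠ i := by
      intro h
      subst h
      exact hnadj0 (hid u0 huv0).symm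
    have hdu0 : G.degree u0 = 1 :=
      H1 v0 (hPall v0) u0 huv0 (fun h => hnadj0 h.symm)
    have hvu0 : v ≠ u0 := by
      intro h
      subst h
      rw [SimpleGraph.card_neighborFinset_eq_degree, hdu0] at h2v
      omega
    have hnadj_u0v : ¬ G.Adj u0 v := by
      intro h
      exact hv (uniq_nbr hdu0 (hid u0 hu0i).symm v h)
    exact hdv (H1 u0 (hPall u0) v hvu0 hnadj_u0v)
  · -- Subcase B
    push_neg at hid
    obtain ⟨u, hui, hniu⟩ := hid
    have hdu : G.degree u = 1 := H1 i hPi u hui hniu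
    obtain ⟨w, huw⟩ := (G.degree_pos_iff_exists_adj u).mp (by omega)
    have hwu : w ≠ u := (G.ne_of_adj huw).symm
    have hwi : w ≠ i := by
      intro h
      subst h
      exact hniu huw.symm
    have hadj_iw : G.Adj i w := by
      by_contra hniw
      have hdw : G.degree w = 1 := H1 i hPi w hwi hniw
      have hcl : ∀ a b, a ∈ ({u, w} : Set V) → G.Adj a b → b ∈ ({u, w} : Set V) := by
        rintro a b (rfl | rfl) hab
        · right; exact uniq_nbr hdu huw b hab
        · left; exact uniq_nbr hdw huw.symm b hab
      obtain ⟨p⟩ := hG.preconnected u i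
      have := walk_mem hcl p (by left; rfl)
      rcases this with h | h
      · exact hui h.symm
      · exact hwi h.symm
    have hPu : P u := H2 i hPi w u hadj_iw huw.symm
    have huniq_u : ∀ z, G.Adj u z → z = w := uniq_nbr hdu huw
    have hdeg1 : ∀ k, k ≠ w → G.degree k = 1 := by
      intro k hk
      by_cases hku : k = u
      · rw [hku]; exact hdu
      · refine H1 u hPu k hku ?_
        intro h
        exact hk (huniq_u k h)
    refine ⟨w, fun v hv => ⟨?_, hdeg1 v hv⟩⟩
    by_cases hvu : v = u
    · subst hvu; exact huw.symm
    by_contra hnwv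
    have hdv : G.degree v = 1 := hdeg1 v hv
    obtain ⟨z, hvz⟩ := (G.degree_pos_iff_exists_adj v).mp (by omega)
    have hzw : z ≠ w := by
      intro h
      subst h
      exact hnwv hvz.symm
    have hzu : z ≠ u := by
      intro h
      subst h
      exact hv (huniq_u v hvz.symm)
    have hdz : G.degree z = 1 := hdeg1 z hzw
    have hdi : G.degree i = 1 := hdeg1 i (Ne.symm hwi)
    have huniq_i : ∀ z', G.Adj i z' → z' = w := uniq_nbr hdi hadj_iw
    have hvi : v ≠ i := by
      intro h
      subst h
      exact hzw (huniq_i z hvz)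
    have hzi : z ≠ i := by
      intro h
      subst h
      exact hv (huniq_i v hvz.symm)
    have hcl : ∀ a b, a ∈ ({v, z} : Set V) → G.Adj a b → b ∈ ({v, z} : Set V) := by
      rintro a b (rfl | rfl) hab
      · right; exact uniq_nbr hdv hvz b hab
      · left; exact uniq_nbr hdz hvz.symm b hab
    obtain ⟨p⟩ := hG.preconnected v i
    have := walk_mem hcl p (by left; rfl)
    rcases this with h | h
    · exact hvi h.symm
    · exact hzi h.symm


variable {V : Type*} [Fintype V] {G : SimpleGraph V}

lemma iso_complete (h : ∀ u v : V, u ≠ v → G.Adj u v) :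
    Nonempty (G ≃g (⊤ : SimpleGraph (Fin (Fintype.card V)))) := by
  refine ⟨⟨Fintype.equivFin V, ?_⟩⟩
  intro u v
  simp only [SimpleGraph.top_adj, ne_eq, EmbeddingLike.apply_eq_iff_eq]
  constructor
  · intro huv; exact h u v huv
  · intro huv; exact G.ne_of_adj huv

lemma iso_star (c : V)
    (h : ∀ u v : V, G.Adj u v ↔ (u = c ∧ v ≠ c) ∨ (v = c ∧ u ≠ c)) :
    Nonempty (G ≃g completeBipartiteGraph (Fin 1) (Fin (Fintype.card V - 1))) := by
  have hcard1 : Fintype.card {x : V // x = c} = 1 := Fintype.card_subtype_eq c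
  have hcard2 : Fintype.card {x : V // ¬ x = c} = Fintype.card V - 1 := by
    rw [Fintype.card_subtype_compl, hcard1]
  let eL : {x : V // x = c} ≃ Fin 1 := Fintype.equivFinOfCardEq hcard1
  let eR : {x : V // ¬ x = c} ≃ Fin (Fintype.card V - 1) := Fintype.equivFinOfCardEq hcard2
  let e : V ≃ (Fin 1 ⊕ Fin (Fintype.card V - 1)) :=
    (Equiv.sumCompl (· = c)).symm.trans (Equiv.sumCongr eL eR)
  have hleft : ∀ u : V, (e u).isLeft = true ↔ u = c := by
    intro u
    by_cases hu : u = c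
    · simp [e, Equiv.sumCompl_symm_apply_of_pos hu, hu]
    · simp [e, Equiv.sumCompl_symm_apply_of_neg hu, hu]
  have hright : ∀ u : V, (e u).isRight = true ↔ u ≠ c := by
    intro u
    rw [← Sum.not_isLeft]
    exact not_congr (hleft u)
  refine ⟨⟨e, ?_⟩⟩
  intro u v
  show (completeBipartiteGraph _ _).Adj (e u) (e v) ↔ G.Adj u v
  rw [h u v]
  simp only [completeBipartiteGraph]
  constructor
  · rintro (⟨h1, h2⟩ | ⟨h1, h2⟩)
    · exact Or.inl ⟨(hleft u).mp h1, (hright v).mp h2⟩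
    · exact Or.inr ⟨(hleft v).mp h2, (hright u).mp h1⟩
  · rintro (⟨h1, h2⟩ | ⟨h1, h2⟩)
    · exact Or.inl ⟨(hleft u).mpr h1, (hright v).mpr h2⟩
    · exact Or.inr ⟨(hright u).mpr h2, (hleft v).mpr h1⟩


variable {V : Type*} [Fintype V] {G : SimpleGraph V}

/-- star structure: neighbor finsets -/
lemma star_nbr_center {c : V}
    (h : ∀ u v : V, G.Adj u v ↔ (u = c ∧ v ≠ c) ∨ (v = c ∧ u ≠ c)) :
    G.neighborFinset c = Finset.univ.erase c := by
  ext v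
  rw [SimpleGraph.mem_neighborFinset, h]
  simp only [Finset.mem_erase, Finset.mem_univ, and_true]
  constructor
  · rintro (⟨-, hv⟩ | ⟨rfl, hv⟩)
    · exact hv
    · exact absurd rfl hv
  · intro hv
    exact Or.inl ⟨by trivial, hv⟩

lemma star_nbr_leaf {c v : V} (hv : v ≠ c)
    (h : ∀ u v : V, G.Adj u v ↔ (u = c ∧ v ≠ c) ∨ (v = c ∧ u ≠ c)) :
    G.neighborFinset v = {c} := by
  ext u
  rw [SimpleGraph.mem_neighborFinset, h]
  simp only [Finset.mem_singleton]
  constructor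
  · rintro (⟨hvc, -⟩ | ⟨huc, -⟩)
    · exact absurd hvc hv
    · exact huc
  · rintro rfl
    exact Or.inr ⟨by trivial, hv⟩

lemma star_edgeCount {c : V}
    (h : ∀ u v : V, G.Adj u v ↔ (u = c ∧ v ≠ c) ∨ (v = c ∧ u ≠ c)) :
    2 * (edgeCount G : ℝ) = 2 * ((Fintype.card V : ℝ) - 1) := by
  rw [← sum_degrees]
  have hdegc : (G.degree c : ℝ) = (Fintype.card V : ℝ) - 1 := by
    rw [SimpleGraph.degree, star_nbr_center h, Finset.card_erase_of_mem (Finset.mem_univ c),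
      Finset.card_univ]
    have : 1 ≤ Fintype.card V := Fintype.card_pos_iff.mpr ⟨c⟩
    push_cast [Nat.cast_sub this]
    ring
  have hdegl : ∀ v, v ≠ c → (G.degree v : ℝ) = 1 := by
    intro v hv
    rw [SimpleGraph.degree, star_nbr_leaf hv h, Finset.card_singleton, Nat.cast_one]
  rw [← Finset.sum_erase_add Finset.univ _ (Finset.mem_univ c), hdegc]
  have : ∑ v ∈ Finset.univ.erase c, (G.degree v : ℝ)
      = ∑ v ∈ Finset.univ.erase c, 1 := by
    apply Finset.sum_congr rfl
    intro v hv
    exact hdegl v (Finset.mem_erase.mp hv).1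
  rw [this, Finset.sum_const, nsmul_eq_mul, mul_one,
    Finset.card_erase_of_mem (Finset.mem_univ c), Finset.card_univ]
  have h1 : 1 ≤ Fintype.card V := Fintype.card_pos_iff.mpr ⟨c⟩
  push_cast [Nat.cast_sub h1]
  ring

lemma star_eigen (hn : 2 ≤ Fintype.card V) {c : V}
    (h : ∀ u v : V, G.Adj u v ↔ (u = c ∧ v ≠ c) ∨ (v = c ∧ u ≠ c)) :
    ∃ x : V → ℝ, x ≠ 0 ∧ (adjMat G).mulVec x
      = Real.sqrt ((Fintype.card V : ℝ) - 1) • x := by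
  set n1 : ℝ := (Fintype.card V : ℝ) - 1 with hn1
  have hn1nn : 0 ≤ n1 := by
    have : (2:ℝ) ≤ (Fintype.card V : ℝ) := by exact_mod_cast hn
    rw [hn1]; linarith
  refine ⟨fun v => if v = c then Real.sqrt n1 else 1, ?_, ?_⟩
  · obtain ⟨v, hv⟩ := Fintype.exists_ne_of_one_lt_card (by omega) c
    intro hx
    have := congrFun hx v
    simp [hv] at this
  · ext u
    rw [Pi.smul_apply, smul_eq_mul]
    show ∑ k, adjMat G u k * _ = _
    rw [sum_adjMat_weighted]
    by_cases hu : u = c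
    · subst hu
      rw [star_nbr_center h]
      have : ∑ k ∈ Finset.univ.erase u, (if k = u then Real.sqrt n1 else 1) =
          ∑ k ∈ Finset.univ.erase u, 1 := by
        apply Finset.sum_congr rfl
        intro k hk
        simp [(Finset.mem_erase.mp hk).1]
      rw [this, Finset.sum_const, nsmul_eq_mul, mul_one,
        Finset.card_erase_of_mem (Finset.mem_univ u), Finset.card_univ, if_pos rfl,
        Real.mul_self_sqrt hn1nn]
      have h1 : 1 ≤ Fintype.card V := by omega
      push_cast [Nat.cast_sub h1]
      ring
    · rw [star_nbr_leaf hu h, Finset.sum_singleton, if_pos rfl, if_neg hu, mul_one]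

/-- complete graph -/
lemma complete_edgeCount (hcv : Nonempty V) (h : ∀ u v : V, u ≠ v → G.Adj u v) :
    2 * (edgeCount G : ℝ) = (Fintype.card V : ℝ) * ((Fintype.card V : ℝ) - 1) := by
  rw [← sum_degrees]
  have hdeg : ∀ v : V, (G.degree v : ℝ) = (Fintype.card V : ℝ) - 1 := by
    intro v
    have : G.neighborFinset v = Finset.univ.erase v := by
      ext u
      simp only [SimpleGraph.mem_neighborFinset, Finset.mem_erase, Finset.mem_univ, and_true]
      constructor
      · intro hadj; exact (G.ne_of_adj hadj).symm
      · intro hu; exact (h u v hu).symm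
    rw [SimpleGraph.degree, this, Finset.card_erase_of_mem (Finset.mem_univ v),
      Finset.card_univ]
    have h1 : 1 ≤ Fintype.card V := Fintype.card_pos_iff.mpr ⟨v⟩
    push_cast [Nat.cast_sub h1]
    ring
  rw [Finset.sum_congr rfl (fun v _ => hdeg v), Finset.sum_const, nsmul_eq_mul,
    Finset.card_univ]

lemma complete_eigen (hcv : Nonempty V) (h : ∀ u v : V, u ≠ v → G.Adj u v) :
    ∃ x : V → ℝ, x ≠ 0 ∧ (adjMat G).mulVec x = ((Fintype.card V : ℝ) - 1) • x := by
  refine ⟨fun _ => 1, ?_, ?_⟩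
  · intro hx
    obtain ⟨v⟩ := hcv
    have := congrFun hx v
    simp at this
  · ext u
    rw [Pi.smul_apply, smul_eq_mul, mul_one]
    show ∑ k, adjMat G u k * _ = _
    rw [sum_adjMat_weighted]
    have : G.neighborFinset u = Finset.univ.erase u := by
      ext v
      simp only [SimpleGraph.mem_neighborFinset, Finset.mem_erase, Finset.mem_univ, and_true]
      constructor
      · intro hadj; exact (G.ne_of_adj hadj).symm
      · intro hv; exact h u v (Ne.symm hv)
    rw [this, Finset.sum_const, nsmul_eq_mul, mul_one,
      Finset.card_erase_of_mem (Finset.mem_univ u), Finset.card_univ]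
    have h1 : 1 ≤ Fintype.card V := Fintype.card_pos_iff.mpr ⟨u⟩
    push_cast [Nat.cast_sub h1]
    ring


variable {V : Type*} [Fintype V] {G : SimpleGraph V}

lemma adj_of_iso_complete {n : ℕ} (e : G ≃g (⊤ : SimpleGraph (Fin n))) :
    ∀ u v : V, u ≠ v → G.Adj u v := by
  intro u v huv
  rw [← e.map_adj_iff]
  simp only [SimpleGraph.top_adj, ne_eq, EmbeddingLike.apply_eq_iff_eq]
  exact huv

lemma adj_of_iso_star {m : ℕ} (e : G ≃g completeBipartiteGraph (Fin 1) (Fin m)) :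
    ∃ c : V, ∀ u v : V, G.Adj u v ↔ (u = c ∧ v ≠ c) ∨ (v = c ∧ u ≠ c) := by
  refine ⟨e.symm (Sum.inl 0), fun u v => ?_⟩
  have hc : ∀ w : V, w = e.symm (Sum.inl 0) ↔ (e w).isLeft = true := by
    intro w
    constructor
    · rintro rfl
      rw [RelIso.apply_symm_apply]
      rfl
    · intro h
      obtain ⟨x, hx⟩ := Sum.isLeft_iff.mp h
      have hx0 : x = 0 := Subsingleton.elim x 0
      subst hx0
      exact e.toEquiv.eq_symm_apply.mpr hx
  have hnc : ∀ w : V, w ≠ e.symm (Sum.inl 0) ↔ (e w).isRight = true := by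
    intro w
    rw [← Sum.not_isLeft]
    exact not_congr (hc w)
  rw [← e.map_adj_iff]
  show (e u).isLeft = true ∧ (e v).isRight = true ∨ (e u).isRight = true ∧ (e v).isLeft = true ↔ _
  rw [← hc u, ← hc v, ← hnc u, ← hnc v]
  tauto


lemma star_adj {c : V} (hc : ∀ v, v ≠ c → G.Adj c v ∧ G.degree v = 1) :
    ∀ u v, G.Adj u v ↔ (u = c ∧ v ≠ c) ∨ (v = c ∧ u ≠ c) := by
  intro u v
  constructor
  · intro h
    by_cases hu : u = c
    · subst hu
      exact Or.inl ⟨rfl, (G.ne_of_adj h).symm⟩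
    · by_cases hv : v = c
      · exact Or.inr ⟨hv, hu⟩
      · exfalso
        exact hv (uniq_nbr (hc u hu).2 ((hc u hu).1.symm) v h)
  · rintro (⟨rfl, hv⟩ | ⟨rfl, hu⟩)
    · exact (hc v hv).1
    · exact ((hc u hu).1).symm

lemma equal_case (hG : G.Connected) (hn2 : 2 ≤ Fintype.card V)
    (hdeg : ∀ v, 1 ≤ G.degree v)
    (hB0 : 0 ≤ 2 * (edgeCount G : ℝ) - Fintype.card V + 1)
    (hEq : adjRad G = Real.sqrt (2 * (edgeCount G : ℝ) - Fintype.card V + 1)) :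
    (∃ c, ∀ u v, G.Adj u v ↔ (u = c ∧ v ≠ c) ∨ (v = c ∧ u ≠ c)) ∨
      (∀ u v, u ≠ v → G.Adj u v) := by
  have hne : Nonempty V := hG.nonempty
  obtain ⟨x, hx0, hMx⟩ := maxEig_mem (adjMat_herm G)
  obtain ⟨i, -, hmaxabs⟩ := Finset.exists_max_image Finset.univ (fun v => |x v|)
    ⟨Classical.arbitrary V, Finset.mem_univ _⟩
  have hmaxabs : ∀ k, |x k| ≤ |x i| := fun k => hmaxabs k (Finset.mem_univ k)
  have hxi : 0 < |x i| := by
    obtain ⟨k, hk⟩ := Function.ne_iff.mp hx0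
    exact lt_of_lt_of_le (abs_pos.mpr hk) (hmaxabs k)
  obtain ⟨y, hy0, hMy, hyi, hymax⟩ : ∃ y : V → ℝ, y ≠ 0 ∧
      (adjMat G).mulVec y = (adjRad G) • y ∧ 0 < y i ∧ ∀ k, y k ≤ y i := by
    rcases le_or_gt 0 (x i) with hp | hn
    · refine ⟨x, hx0, hMx, ?_, ?_⟩
      · rwa [abs_of_nonneg hp] at hxi
      · intro k
        calc x k ≤ |x k| := le_abs_self _
          _ ≤ |x i| := hmaxabs k
          _ = x i := abs_of_nonneg hp
    · refine ⟨-x, neg_ne_zero.mpr hx0, ?_, ?_, ?_⟩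
      · rw [Matrix.mulVec_neg, hMx, smul_neg]
        rfl
      · simp only [Pi.neg_apply]
        linarith
      · intro k
        simp only [Pi.neg_apply]
        calc -x k ≤ |x k| := neg_le_abs _
          _ ≤ |x i| := hmaxabs k
          _ = -x i := abs_of_neg hn
  have ht2 : (adjRad G)^2 = 2 * (edgeCount G : ℝ) - Fintype.card V + 1 := by
    rw [hEq]
    exact Real.sq_sqrt hB0
  have hforce := fun j hj => forcing hdeg hMy ht2 hyi hymax j hj
  have hstar := comb hG hdeg (fun j => y j = y i) i rfl
    (fun j hj => (hforce j hj).1)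
    (fun j hj m k hjm hmk => (hforce j hj).2 m k hjm hmk)
  rcases hstar with ⟨c, hc⟩ | hcomp
  · left
    exact ⟨c, star_adj (fun v hv => hc v hv)⟩
  · right
    exact hcomp


end Two

end HongAux

/-- **Lemma 2.3** (Hong). `ρ(G) ≤ √(2e(G) − n + 1)`, with equality iff `G` is the star
`K_{1,n−1}` or the complete graph `K_n`. -/
theorem adjRad_le_sqrt {V : Type*} [Fintype V] (G : SimpleGraph V) (hG : G.Connected) :
    adjRad G ≤ Real.sqrt (2 * (edgeCount G : ℝ) - Fintype.card V + 1) ∧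
      (adjRad G = Real.sqrt (2 * (edgeCount G : ℝ) - Fintype.card V + 1) ↔
        Nonempty (G ≃g completeBipartiteGraph (Fin 1) (Fin (Fintype.card V - 1))) ∨
          Nonempty (G ≃g (⊤ : SimpleGraph (Fin (Fintype.card V))))) := by
  classical
  have hne : Nonempty V := hG.nonempty
  have hn1 : 1 ≤ Fintype.card V := Fintype.card_pos
  rcases eq_or_lt_of_le hn1 with h1 | h2
  · -- the one-vertex case
    have hsing : Subsingleton V := Fintype.card_le_one_iff_subsingleton.mp (le_of_eq h1.symm)
    have hbot : ∀ u v : V, ¬ G.Adj u v := fun u v h => G.ne_of_adj h (Subsingleton.elim u v)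
    have hA : adjMat G = 0 := by
      ext u v
      simp [HongAux.adjMat_apply, hbot u v]
    have hGbot : G = ⊥ := by
      ext u v
      simp [hbot u v]
    have hE : (edgeCount G : ℝ) = 0 := by
      rw [edgeCount, hGbot, SimpleGraph.edgeSet_bot, Set.ncard_empty]
      norm_num
    have hrad : adjRad G = 0 := by
      have hset : {t : ℝ | ∃ x : V → ℝ, x ≠ 0 ∧ (adjMat G).mulVec x = t • x} = {0} := by
        ext t
        simp only [Set.mem_setOf_eq, Set.mem_singleton_iff]
        constructor
        · rintro ⟨x, hx, hMx⟩
          rw [hA, Matrix.zero_mulVec] at hMx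
          rcases smul_eq_zero.mp hMx.symm with h | h
          · exact h
          · exact absurd h hx
        · rintro rfl
          refine ⟨fun _ => 1, ?_, by rw [hA, Matrix.zero_mulVec, zero_smul]⟩
          intro h
          have := congrFun h (Classical.arbitrary V)
          norm_num at this
      rw [adjRad, maxEig, hset, csSup_singleton]
    have hsq : Real.sqrt (2 * (edgeCount G : ℝ) - Fintype.card V + 1) = 0 := by
      rw [hE, ← h1]
      norm_num
    refine ⟨by rw [hrad, hsq], ?_, ?_⟩
    · intro _
      left
      exact HongAux.iso_star (Classical.arbitrary V) (fun u v =>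
        iff_of_false (hbot u v) (by
          rintro (⟨-, h⟩ | ⟨-, h⟩) <;> exact h (Subsingleton.elim _ _)))
    · intro _
      rw [hrad, hsq]
  · -- at least two vertices
    have hn2 : 2 ≤ Fintype.card V := h2
    have hdeg : ∀ v, 1 ≤ G.degree v := HongAux.degree_pos hG hn2
    have hB1 : (1:ℝ) ≤ 2 * (edgeCount G : ℝ) - Fintype.card V + 1 := HongAux.one_le_B hG hdeg
    have hB0 : (0:ℝ) ≤ 2 * (edgeCount G : ℝ) - Fintype.card V + 1 := by linarith
    have hineq : adjRad G ≤ Real.sqrt (2 * (edgeCount G : ℝ) - Fintype.card V + 1) := by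
      rw [adjRad, maxEig]
      apply Real.sSup_le
      · rintro t ⟨x, hx, hMx⟩
        have hsqle := HongAux.eig_sq_le hdeg hx hMx
        calc t ≤ |t| := le_abs_self t
          _ = Real.sqrt (t^2) := (Real.sqrt_sq_eq_abs t).symm
          _ ≤ _ := Real.sqrt_le_sqrt hsqle
      · exact Real.sqrt_nonneg _
    refine ⟨hineq, ?_, ?_⟩
    · intro hEq
      rcases HongAux.equal_case hG hn2 hdeg hB0 hEq with ⟨c, hc⟩ | hcomp
      · exact Or.inl (HongAux.iso_star c hc)
      · exact Or.inr (HongAux.iso_complete hcomp)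
    · intro hiso
      refine le_antisymm hineq ?_
      rcases hiso with ⟨⟨e⟩⟩ | ⟨⟨e⟩⟩
      · obtain ⟨c, hchar⟩ := HongAux.adj_of_iso_star e
        have h2E := HongAux.star_edgeCount hchar
        obtain ⟨x, hx, hMx⟩ := HongAux.star_eigen hn2 hchar
        have hBeq : 2 * (edgeCount G : ℝ) - Fintype.card V + 1
            = (Fintype.card V : ℝ) - 1 := by linarith
        rw [hBeq]
        exact HongAux.le_maxEig (HongAux.adjMat_herm G) hx hMx
      · have hcomp := HongAux.adj_of_iso_complete e
        have h2E := HongAux.complete_edgeCount hne hcomp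
        obtain ⟨x, hx, hMx⟩ := HongAux.complete_eigen hne hcomp
        have hBeq : 2 * (edgeCount G : ℝ) - Fintype.card V + 1
            = ((Fintype.card V : ℝ) - 1)^2 := by linear_combination h2E
        have hcast : (2:ℝ) ≤ (Fintype.card V : ℝ) := by exact_mod_cast hn2
        rw [hBeq, Real.sqrt_sq (by linarith)]
        exact HongAux.le_maxEig (HongAux.adjMat_herm G) hx hMx
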